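/- For 0 ≤ λ < 4 define h(r, λ) = ∫₀^r g(s,λ)/√(1 − g(s,λ)²) ds with g(s,λ) = s + (λ/8)(s − s³), the bubble length H(λ) = 2 h(1,λ), and the dimensionless bubble volume V(λ) = 2( π h(1,λ) − 2π ∫₀¹ h(r,λ)·r dr ). Then V(λ) − π H(λ) = −4π ∫₀¹ h(r,λ)·r dr converges to a finite limit as λ → 4 from below, equal to −4π ∫₀¹ h(r,4)·r dr; in particular V(λ) − π H(λ) remains bounded even though both V(λ) and H(λ) diverge to +∞ as λ → 4⁻. -/

import Mathlib

open Real Set Filter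

/-- Interface height `h(r, λ)` of the spinning bubble (nondimensionalized by its
maximum radius), obtained by integrating the slope `g/√(1-g²)` with
`g(s,λ) = s + (λ/8)(s - s³)`. -/
noncomputable def bubbleHeight (r lam : ℝ) : ℝ :=
  ∫ s in (0:ℝ)..r,
    (s + lam / 8 * (s - s ^ 3)) / Real.sqrt (1 - (s + lam / 8 * (s - s ^ 3)) ^ 2)

/-- The bubble axial length `H(λ) = 2 h(1,λ)`. -/
noncomputable def bubbleH (lam : ℝ) : ℝ := 2 * bubbleHeight 1 lam

/-- The dimensionless bubble volume `V(λ) = 2(π h(1,λ) - 2π ∫₀¹ h(r,λ) r dr)`. -/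
noncomputable def bubbleV (lam : ℝ) : ℝ :=
  2 * (π * bubbleHeight 1 lam - 2 * π * ∫ r in (0:ℝ)..1, bubbleHeight r lam * r)

open MeasureTheory

noncomputable def gfun (lam s : ℝ) : ℝ := s + lam / 8 * (s - s ^ 3)
noncomputable def Ffun (lam s : ℝ) : ℝ := gfun lam s / Real.sqrt (1 - gfun lam s ^ 2)

section basic
variable {lam s : ℝ}

lemma gfun_nonneg (hl0 : 0 ≤ lam) (hs0 : 0 ≤ s) (hs1 : s ≤ 1) : 0 ≤ gfun lam s := by
  unfold gfun
  nlinarith [mul_nonneg hl0 (mul_nonneg (mul_nonneg hs0 (by linarith : (0:ℝ) ≤ 1 - s))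
    (by linarith : (0:ℝ) ≤ 1 + s))]

lemma one_sub_ge (hl0 : 0 ≤ lam) (hl4 : lam ≤ 4) (hs0 : 0 ≤ s) (hs1 : s ≤ 1) :
    (1 - s) ^ 2 ≤ 1 - gfun lam s := by
  unfold gfun
  nlinarith [mul_nonneg (mul_nonneg hs0 (by linarith : (0:ℝ) ≤ 1 - s))
    (by nlinarith : (0:ℝ) ≤ 8 - lam * (1 + s))]

lemma gfun_le_one (hl0 : 0 ≤ lam) (hl4 : lam ≤ 4) (hs0 : 0 ≤ s) (hs1 : s ≤ 1) :
    gfun lam s ≤ 1 := by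
  nlinarith [one_sub_ge hl0 hl4 hs0 hs1, sq_nonneg (1 - s)]

lemma one_sub_sq_ge (hl0 : 0 ≤ lam) (hl4 : lam ≤ 4) (hs0 : 0 ≤ s) (hs1 : s ≤ 1) :
    (1 - s) ^ 2 ≤ 1 - gfun lam s ^ 2 := by
  have h1 := one_sub_ge hl0 hl4 hs0 hs1
  have h2 := gfun_nonneg hl0 hs0 hs1
  have h3 := gfun_le_one hl0 hl4 hs0 hs1
  nlinarith [mul_nonneg (by linarith : (0:ℝ) ≤ 1 - gfun lam s) h2]

lemma Ffun_nonneg (hl0 : 0 ≤ lam) (hs0 : 0 ≤ s) (hs1 : s ≤ 1) : 0 ≤ Ffun lam s :=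
  div_nonneg (gfun_nonneg hl0 hs0 hs1) (Real.sqrt_nonneg _)

lemma sqrt_den_ge (hl0 : 0 ≤ lam) (hl4 : lam ≤ 4) (hs0 : 0 ≤ s) (hs1 : s ≤ 1) :
    1 - s ≤ Real.sqrt (1 - gfun lam s ^ 2) := by
  have := Real.sqrt_le_sqrt (one_sub_sq_ge hl0 hl4 hs0 hs1)
  rwa [Real.sqrt_sq (by linarith : (0:ℝ) ≤ 1 - s)] at this

lemma Ffun_le (hl0 : 0 ≤ lam) (hl4 : lam ≤ 4) (hs0 : 0 ≤ s) (hs1 : s < 1) :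
    Ffun lam s ≤ 1 / (1 - s) := by
  exact div_le_div₀ zero_le_one (gfun_le_one hl0 hl4 hs0 hs1.le) (by linarith)
    (sqrt_den_ge hl0 hl4 hs0 hs1.le)

lemma Ffun_lower (h12 : 1/2 ≤ s) (hs1 : s < 1) : 1 / (4 * (1 - s)) ≤ Ffun 4 s := by
  have hs0 : (0:ℝ) ≤ s := by linarith
  have hg0 := gfun_nonneg (by norm_num) hs0 hs1.le (lam := 4)
  have hg1 := gfun_le_one (by norm_num) le_rfl hs0 hs1.le (lam := 4)
  have hghalf : 1/2 ≤ gfun 4 s := by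
    unfold gfun
    nlinarith [mul_nonneg (mul_nonneg hs0 (by linarith : (0:ℝ) ≤ 1 - s)) (by linarith : (0:ℝ) ≤ 1 + s)]
  have hsq : 1 - gfun 4 s ^ 2 ≤ (2 * (1 - s)) ^ 2 := by unfold gfun at *; nlinarith
  have hden : Real.sqrt (1 - gfun 4 s ^ 2) ≤ 2 * (1 - s) := by
    have := Real.sqrt_le_sqrt hsq
    rwa [Real.sqrt_sq (by linarith : (0:ℝ) ≤ 2 * (1 - s))] at this
  have hdpos : 0 < Real.sqrt (1 - gfun 4 s ^ 2) := by
    have := one_sub_sq_ge (lam := 4) (by norm_num) le_rfl hs0 hs1.le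
    exact Real.sqrt_pos.2 (by nlinarith)
  have : (1:ℝ)/2 / (2 * (1 - s)) ≤ Ffun 4 s :=
    div_le_div₀ hg0 hghalf hdpos hden
  have heq : (1:ℝ)/2 / (2 * (1 - s)) = 1 / (4 * (1 - s)) := by
    rw [div_eq_div_iff (by linarith) (by linarith)]; ring
  linarith [heq ▸ this]

end basic

lemma Ffun_measurable (lam : ℝ) : Measurable (Ffun lam) := by
  unfold Ffun gfun
  exact (measurable_id.add ((measurable_const.mul (measurable_id.sub (measurable_id.pow_const 3))))).div
    (Real.continuous_sqrt.measurable.comp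
      (measurable_const.sub ((measurable_id.add ((measurable_const.mul (measurable_id.sub (measurable_id.pow_const 3))))).pow_const 2)))

lemma intgr_bound : IntervalIntegrable (fun s : ℝ => (1 - s) ^ (-(1:ℝ)/2)) volume 0 1 := by
  have h := (intervalIntegral.intervalIntegrable_rpow' (a := 0) (b := 1) (r := -(1:ℝ)/2)
    (by norm_num)).comp_sub_left 1
  simpa using h.symm

lemma rpow_half_eq {x : ℝ} (hx : 0 ≤ x) : x ^ (-(1:ℝ)/2) = (Real.sqrt x)⁻¹ := by
  rw [Real.sqrt_eq_rpow, ← Real.rpow_neg hx]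
  norm_num

lemma Ffun_one (lam : ℝ) : Ffun lam 1 = 0 := by
  simp [Ffun, gfun]

lemma Ffun_intervalIntegrable {lam : ℝ} (hl0 : 0 ≤ lam) (hl4 : lam < 4) :
    IntervalIntegrable (Ffun lam) volume 0 1 := by
  have hc : (0:ℝ) < 1 - lam/4 := by linarith
  have hbd : IntegrableOn (fun s : ℝ => (1 - lam/4) ^ (-(1:ℝ)/2) * (1 - s) ^ (-(1:ℝ)/2))
      (Ioc 0 1) volume :=
    (intervalIntegrable_iff_integrableOn_Ioc_of_le zero_le_one).mp
      (intgr_bound.const_mul ((1 - lam/4) ^ (-(1:ℝ)/2)))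
  rw [intervalIntegrable_iff_integrableOn_Ioc_of_le zero_le_one]
  refine MeasureTheory.Integrable.mono' hbd (Ffun_measurable lam).aestronglyMeasurable ?_
  filter_upwards [MeasureTheory.ae_restrict_mem measurableSet_Ioc] with s hs
  obtain ⟨hs0, hs1⟩ := hs
  rcases eq_or_lt_of_le hs1 with heq | hs1
  · subst heq
    rw [Ffun_one, sub_self, Real.zero_rpow (by norm_num : (-(1:ℝ)/2) ≠ 0)]
    simp
  · have hden : (1 - lam/4) * (1 - s) ≤ 1 - gfun lam s ^ 2 := by
      have h2 := gfun_nonneg hl0 hs0.le hs1.le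
      have h3 := gfun_le_one hl0 hl4.le hs0.le hs1.le
      have step1 : (1 - lam/4) * (1 - s) ≤ 1 - gfun lam s := by
        unfold gfun
        nlinarith [mul_nonneg hl0 (mul_nonneg (sq_nonneg (1 - s)) (by linarith : (0:ℝ) ≤ 2 + s))]
      nlinarith [mul_nonneg h2 (sub_nonneg.2 h3)]
    have hdpos : (0:ℝ) < (1 - lam/4) * (1 - s) := mul_pos hc (by linarith)
    have hFle : Ffun lam s ≤ (Real.sqrt ((1 - lam/4) * (1 - s)))⁻¹ := by
      rw [← one_div]
      exact div_le_div₀ zero_le_one (gfun_le_one hl0 hl4.le hs0.le hs1.le)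
        (Real.sqrt_pos.2 hdpos) (Real.sqrt_le_sqrt hden)
    rw [Real.norm_eq_abs, abs_of_nonneg (Ffun_nonneg hl0 hs0.le hs1.le)]
    calc Ffun lam s ≤ (Real.sqrt ((1 - lam/4) * (1 - s)))⁻¹ := hFle
      _ = (1 - lam/4) ^ (-(1:ℝ)/2) * (1 - s) ^ (-(1:ℝ)/2) := by
          rw [Real.sqrt_mul hc.le, mul_inv, rpow_half_eq hc.le, rpow_half_eq (by linarith)]

lemma Ffun_continuousOn {lam b : ℝ} (hl0 : 0 ≤ lam) (hl4 : lam ≤ 4) (hb : b < 1) :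
    ContinuousOn (Ffun lam) (Icc 0 b) := by
  unfold Ffun
  apply ContinuousOn.div
  · unfold gfun; fun_prop
  · unfold gfun; fun_prop
  · intro s hs
    obtain ⟨hs0, hsb⟩ := hs
    have hs1 : s < 1 := lt_of_le_of_lt hsb hb
    have := one_sub_sq_ge hl0 hl4 hs0 hs1.le
    exact (Real.sqrt_pos.2 (by nlinarith)).ne'

lemma bubbleHeight_eq (r lam : ℝ) : bubbleHeight r lam = ∫ s in (0:ℝ)..r, Ffun lam s := rfl

lemma bubbleHeight_nonneg {r lam : ℝ} (hl0 : 0 ≤ lam) (hr0 : 0 ≤ r) (hr1 : r ≤ 1) :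
    0 ≤ bubbleHeight r lam := by
  rw [bubbleHeight_eq]
  refine intervalIntegral.integral_nonneg hr0 fun s hs => ?_
  exact Ffun_nonneg hl0 hs.1 (le_trans hs.2 hr1)

lemma tendsto_inner {r : ℝ} (hr0 : 0 ≤ r) (hr1 : r < 1) :
    Tendsto (fun lam => bubbleHeight r lam) (nhdsWithin 4 (Iio 4))
      (nhds (bubbleHeight r 4)) := by
  have hrw : ∀ lam : ℝ, bubbleHeight r lam = ∫ s in Ioc (0:ℝ) r, Ffun lam s := by
    intro lam
    rw [bubbleHeight_eq, intervalIntegral.integral_of_le hr0]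
  simp only [hrw]
  refine MeasureTheory.tendsto_integral_filter_of_dominated_convergence
    (fun _ => (1 - r)⁻¹) ?_ ?_ ?_ ?_
  · exact Filter.Eventually.of_forall fun lam =>
      (Ffun_measurable lam).aestronglyMeasurable
  · have h0 : ∀ᶠ lam : ℝ in nhdsWithin 4 (Iio 4), 0 < lam :=
      eventually_nhdsWithin_of_eventually_nhds (eventually_gt_nhds (by norm_num))
    have h4 : ∀ᶠ lam : ℝ in nhdsWithin 4 (Iio 4), lam < 4 :=
      eventually_mem_nhdsWithin
    filter_upwards [h0, h4] with lam hl0 hl4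
    filter_upwards [MeasureTheory.ae_restrict_mem measurableSet_Ioc] with s hs
    obtain ⟨hs0, hsr⟩ := hs
    have hs1 : s < 1 := lt_of_le_of_lt hsr hr1
    rw [Real.norm_eq_abs, abs_of_nonneg (Ffun_nonneg hl0.le hs0.le hs1.le)]
    calc Ffun lam s ≤ 1 / (1 - s) := Ffun_le hl0.le hl4.le hs0.le hs1
      _ ≤ 1 / (1 - r) := by
          apply one_div_le_one_div_of_le (by linarith) (by linarith)
      _ = (1 - r)⁻¹ := one_div _
  · exact MeasureTheory.integrableOn_const measure_Ioc_lt_top.ne (by simp)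
  · filter_upwards [MeasureTheory.ae_restrict_mem measurableSet_Ioc] with s hs
    obtain ⟨hs0, hsr⟩ := hs
    have hs1 : s < 1 := lt_of_le_of_lt hsr hr1
    have hne : Real.sqrt (1 - gfun 4 s ^ 2) ≠ 0 := by
      have := one_sub_sq_ge (lam := 4) (by norm_num) le_rfl hs0.le hs1.le
      exact (Real.sqrt_pos.2 (by nlinarith)).ne'
    have hcont : ContinuousAt (fun lam => Ffun lam s) 4 := by
      unfold Ffun gfun
      apply ContinuousAt.div
      · fun_prop
      · fun_prop
      · exact hne
    exact hcont.tendsto.mono_left nhdsWithin_le_nhds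

lemma integral_one_div_one_sub {a b : ℝ} (ha : a ≤ b) (hb : b < 1) :
    ∫ s in a..b, 1 / (1 - s) = Real.log (1 - a) - Real.log (1 - b) := by
  have h := intervalIntegral.integral_comp_sub_left (a := a) (b := b) (fun x => 1 / x) 1
  rw [h, integral_one_div]
  · rw [Real.log_div (by linarith) (by linarith)]
  · rw [Set.uIcc_of_le (by linarith)]
    intro hc
    exact absurd hc.1 (by simp; linarith)

lemma height_le_log {r lam : ℝ} (hl0 : 0 ≤ lam) (hl4 : lam < 4) (hr0 : 0 ≤ r) (hr1 : r < 1) :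
    bubbleHeight r lam ≤ -Real.log (1 - r) := by
  rw [bubbleHeight_eq]
  have hFi : IntervalIntegrable (Ffun lam) volume 0 r :=
    (Ffun_intervalIntegrable hl0 hl4).mono_set
      (by rw [Set.uIcc_of_le hr0, Set.uIcc_of_le zero_le_one]; exact Icc_subset_Icc le_rfl hr1.le)
  have hgi : IntervalIntegrable (fun s : ℝ => 1 / (1 - s)) volume 0 r := by
    apply ContinuousOn.intervalIntegrable
    rw [Set.uIcc_of_le hr0]
    apply ContinuousOn.div continuousOn_const (by fun_prop)
    intro s hs
    have : s < 1 := lt_of_le_of_lt hs.2 hr1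
    intro h; linarith [sub_eq_zero.mp h]
  calc (∫ s in (0:ℝ)..r, Ffun lam s) ≤ ∫ s in (0:ℝ)..r, 1 / (1 - s) := by
        refine intervalIntegral.integral_mono_on hr0 hFi hgi fun s hs => ?_
        exact Ffun_le hl0 hl4.le hs.1 (lt_of_le_of_lt hs.2 hr1)
    _ = Real.log (1 - 0) - Real.log (1 - r) := integral_one_div_one_sub hr0 hr1
    _ = -Real.log (1 - r) := by norm_num

lemma neg_log_le_two_rpow {u : ℝ} (hu : 0 < u) : -Real.log u ≤ 2 * u ^ (-(1:ℝ)/2) := by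
  have hsq : 0 < Real.sqrt u := Real.sqrt_pos.2 hu
  have h1 : Real.log ((Real.sqrt u)⁻¹) ≤ (Real.sqrt u)⁻¹ - 1 :=
    Real.log_le_sub_one_of_pos (inv_pos.2 hsq)
  have h2 : Real.log ((Real.sqrt u)⁻¹) = -(Real.log u / 2) := by
    rw [Real.log_inv, Real.log_sqrt hu.le]
  rw [rpow_half_eq hu.le]
  nlinarith [inv_pos.2 hsq]

lemma tendsto_outer :
    Tendsto (fun lam => ∫ r in (0:ℝ)..1, bubbleHeight r lam * r) (nhdsWithin 4 (Iio 4))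
      (nhds (∫ r in (0:ℝ)..1, bubbleHeight r 4 * r)) := by
  have hrw : ∀ lam : ℝ, (∫ r in (0:ℝ)..1, bubbleHeight r lam * r)
      = ∫ r in Ioc (0:ℝ) 1, bubbleHeight r lam * r := fun lam =>
    intervalIntegral.integral_of_le zero_le_one
  simp only [hrw]
  refine MeasureTheory.tendsto_integral_filter_of_dominated_convergence
    (fun r => 2 * (1 - r) ^ (-(1:ℝ)/2)) ?_ ?_ ?_ ?_
  · have h0 : ∀ᶠ lam : ℝ in nhdsWithin 4 (Iio 4), 0 < lam :=
      eventually_nhdsWithin_of_eventually_nhds (eventually_gt_nhds (by norm_num))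
    have h4 : ∀ᶠ lam : ℝ in nhdsWithin 4 (Iio 4), lam < 4 := eventually_mem_nhdsWithin
    filter_upwards [h0, h4] with lam hl0 hl4
    have hio : IntegrableOn (Ffun lam) (Icc (0:ℝ) 1) volume := by
      rw [integrableOn_Icc_iff_integrableOn_Ioc]
      exact (intervalIntegrable_iff_integrableOn_Ioc_of_le zero_le_one).mp
        (Ffun_intervalIntegrable hl0.le hl4)
    have hcont : ContinuousOn (fun r => bubbleHeight r lam * r) (Icc (0:ℝ) 1) := by
      apply ContinuousOn.mul _ continuousOn_id
      have := intervalIntegral.continuousOn_primitive (a := 0) (b := 1) hio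
      apply this.congr
      intro r hr
      show bubbleHeight r lam = ∫ t in Ioc (0:ℝ) r, Ffun lam t ∂volume
      rw [bubbleHeight_eq, intervalIntegral.integral_of_le hr.1]
    exact (hcont.aestronglyMeasurable measurableSet_Icc).mono_measure
      (MeasureTheory.Measure.restrict_mono Ioc_subset_Icc_self le_rfl)
  · have h0 : ∀ᶠ lam : ℝ in nhdsWithin 4 (Iio 4), 0 < lam :=
      eventually_nhdsWithin_of_eventually_nhds (eventually_gt_nhds (by norm_num))
    have h4 : ∀ᶠ lam : ℝ in nhdsWithin 4 (Iio 4), lam < 4 := eventually_mem_nhdsWithin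
    filter_upwards [h0, h4] with lam hl0 hl4
    have hne : ∀ᵐ r : ℝ ∂(volume.restrict (Ioc (0:ℝ) 1)), r ≠ 1 := by
      apply MeasureTheory.ae_restrict_of_ae
      rw [MeasureTheory.ae_iff]
      have h1 : {a : ℝ | ¬ a ≠ 1} = {1} := by ext a; simp
      rw [h1]
      exact MeasureTheory.measure_singleton 1
    filter_upwards [MeasureTheory.ae_restrict_mem measurableSet_Ioc, hne] with r hr hrne
    obtain ⟨hr0, hr1'⟩ := hr
    have hr1 : r < 1 := lt_of_le_of_ne hr1' hrne
    have hh0 : 0 ≤ bubbleHeight r lam := bubbleHeight_nonneg hl0.le hr0.le hr1'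
    rw [Real.norm_eq_abs, abs_of_nonneg (mul_nonneg hh0 hr0.le)]
    calc bubbleHeight r lam * r ≤ bubbleHeight r lam * 1 := by
          apply mul_le_mul_of_nonneg_left hr1.le hh0
      _ = bubbleHeight r lam := mul_one _
      _ ≤ -Real.log (1 - r) := height_le_log hl0.le hl4 hr0.le hr1
      _ ≤ 2 * (1 - r) ^ (-(1:ℝ)/2) := neg_log_le_two_rpow (by linarith)
  · exact (intervalIntegrable_iff_integrableOn_Ioc_of_le zero_le_one).mp
      (intgr_bound.const_mul 2)
  · have hne : ∀ᵐ r : ℝ ∂(volume.restrict (Ioc (0:ℝ) 1)), r ≠ 1 := by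
      apply MeasureTheory.ae_restrict_of_ae
      rw [MeasureTheory.ae_iff]
      have h1 : {a : ℝ | ¬ a ≠ 1} = {1} := by ext a; simp
      rw [h1]
      exact MeasureTheory.measure_singleton 1
    filter_upwards [MeasureTheory.ae_restrict_mem measurableSet_Ioc, hne] with r hr hrne
    exact (tendsto_inner hr.1.le (lt_of_le_of_ne hr.2 hrne)).mul_const r

lemma height_mono {lam r : ℝ} (hl0 : 0 ≤ lam) (hl4 : lam < 4) (hr0 : 0 ≤ r) (hr1 : r ≤ 1) :
    bubbleHeight r lam ≤ bubbleHeight 1 lam := by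
  have hint := Ffun_intervalIntegrable hl0 hl4
  have h1 : IntervalIntegrable (Ffun lam) volume 0 r :=
    hint.mono_set (by
      rw [Set.uIcc_of_le hr0, Set.uIcc_of_le zero_le_one]
      exact Icc_subset_Icc le_rfl hr1)
  have h2 : IntervalIntegrable (Ffun lam) volume r 1 :=
    hint.mono_set (by
      rw [Set.uIcc_of_le hr1, Set.uIcc_of_le zero_le_one]
      exact Icc_subset_Icc hr0 le_rfl)
  have hadd := intervalIntegral.integral_add_adjacent_intervals h1 h2
  rw [bubbleHeight_eq, bubbleHeight_eq, ← hadd]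
  have : 0 ≤ ∫ s in r..(1:ℝ), Ffun lam s :=
    intervalIntegral.integral_nonneg hr1 fun s hs =>
      Ffun_nonneg hl0 (le_trans hr0 hs.1) hs.2
  linarith

lemma height4_lb {r : ℝ} (h12 : 1/2 ≤ r) (hr1 : r < 1) :
    (1/4) * (Real.log (1/2) - Real.log (1 - r)) ≤ bubbleHeight r 4 := by
  have hcont : ContinuousOn (Ffun 4) (Icc 0 r) :=
    Ffun_continuousOn (by norm_num) le_rfl hr1
  have h1 : IntervalIntegrable (Ffun 4) volume 0 (1/2) :=
    (hcont.mono (Icc_subset_Icc le_rfl h12)).intervalIntegrable_of_Icc (by norm_num)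
  have h2 : IntervalIntegrable (Ffun 4) volume (1/2) r :=
    (hcont.mono (Icc_subset_Icc (by norm_num) le_rfl)).intervalIntegrable_of_Icc h12
  have hadd := intervalIntegral.integral_add_adjacent_intervals h1 h2
  rw [bubbleHeight_eq, ← hadd]
  have hfirst : 0 ≤ ∫ s in (0:ℝ)..(1/2), Ffun 4 s :=
    intervalIntegral.integral_nonneg (by norm_num) fun s hs =>
      Ffun_nonneg (by norm_num) hs.1 (by linarith [hs.2])
  have hglow : IntervalIntegrable (fun s : ℝ => 1/4 * (1 / (1 - s))) volume (1/2) r := by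
    apply ContinuousOn.intervalIntegrable_of_Icc h12
    apply ContinuousOn.mul continuousOn_const
    apply ContinuousOn.div continuousOn_const (by fun_prop)
    intro s hs
    have : s < 1 := lt_of_le_of_lt hs.2 hr1
    intro h; linarith [sub_eq_zero.mp h]
  have hsecond : (1/4) * (Real.log (1/2) - Real.log (1 - r)) ≤ ∫ s in (1/2:ℝ)..r, Ffun 4 s := by
    have hcomp : (∫ s in (1/2:ℝ)..r, 1/4 * (1 / (1 - s))) ≤ ∫ s in (1/2:ℝ)..r, Ffun 4 s := by
      refine intervalIntegral.integral_mono_on h12 hglow h2 fun s hs => ?_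
      have hlow := Ffun_lower hs.1 (lt_of_le_of_lt hs.2 hr1)
      have heq : 1/4 * (1 / (1 - s)) = 1 / (4 * (1 - s)) := by
        have : (1:ℝ) - s ≠ 0 := by
          have : s < 1 := lt_of_le_of_lt hs.2 hr1; intro h; linarith [sub_eq_zero.mp h]
        field_simp
      rw [heq]; exact hlow
    have hval : (∫ s in (1/2:ℝ)..r, 1/4 * (1 / (1 - s)))
        = 1/4 * (Real.log (1 - 1/2) - Real.log (1 - r)) := by
      rw [intervalIntegral.integral_const_mul, integral_one_div_one_sub h12 hr1]
    rw [hval] at hcomp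
    norm_num at hcomp ⊢
    linarith
  linarith

lemma tendsto_H1 : Tendsto (fun lam => bubbleHeight 1 lam) (nhdsWithin 4 (Iio 4)) atTop := by
  rw [tendsto_atTop]
  intro M
  set K : ℝ := max (M + 1) 1 with hK
  have hK1 : 1 ≤ K := le_max_right _ _
  have hKM : M < K := lt_of_lt_of_le (lt_add_one M) (le_max_left _ _)
  set r : ℝ := 1 - Real.exp (Real.log (1/2) - 4 * K) with hrdef
  have hexp : Real.exp (Real.log (1/2) - 4 * K) ≤ 1/2 := by
    calc Real.exp (Real.log (1/2) - 4 * K) ≤ Real.exp (Real.log (1/2)) :=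
          Real.exp_le_exp.2 (by nlinarith)
      _ = 1/2 := Real.exp_log (by norm_num)
  have hr12 : 1/2 ≤ r := by simp only [hrdef]; linarith
  have hr1 : r < 1 := by
    simp only [hrdef]; linarith [Real.exp_pos (Real.log (1/2) - 4 * K)]
  have hlog : Real.log (1 - r) = Real.log (1/2) - 4 * K := by
    simp only [hrdef]
    rw [sub_sub_cancel, Real.log_exp]
  have hlb : K ≤ bubbleHeight r 4 := by
    have := height4_lb hr12 hr1
    rw [hlog] at this
    linarith
  have hev : ∀ᶠ lam in nhdsWithin 4 (Iio 4), M < bubbleHeight r lam :=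
    (tendsto_inner (le_trans (by norm_num : (0:ℝ) ≤ 1/2) hr12) hr1).eventually (eventually_gt_nhds (lt_of_lt_of_le hKM hlb))
  have h0 : ∀ᶠ lam : ℝ in nhdsWithin 4 (Iio 4), 0 < lam :=
    eventually_nhdsWithin_of_eventually_nhds (eventually_gt_nhds (by norm_num))
  have h4 : ∀ᶠ lam : ℝ in nhdsWithin 4 (Iio 4), lam < 4 := eventually_mem_nhdsWithin
  filter_upwards [hev, h0, h4] with lam hM hl0 hl4
  exact le_trans hM.le (height_mono hl0.le hl4 (le_trans (by norm_num : (0:ℝ) ≤ 1/2) hr12) hr1.le)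

/-- `V(λ) - π H(λ) = -4π ∫₀¹ h(r,λ) r dr` stays bounded and converges to the finite
limit `-4π ∫₀¹ h(r,4) r dr` as `λ → 4⁻`, although `V` and `H` both diverge to `+∞`. -/
theorem stmt_19 :
    (∀ lam : ℝ, 0 ≤ lam → lam < 4 →
      bubbleV lam - π * bubbleH lam
        = -4 * π * ∫ r in (0:ℝ)..1, bubbleHeight r lam * r) ∧
    Tendsto (fun lam => bubbleV lam - π * bubbleH lam)
      (nhdsWithin 4 (Iio 4))
      (nhds (-4 * π * ∫ r in (0:ℝ)..1, bubbleHeight r 4 * r)) ∧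
    Tendsto bubbleV (nhdsWithin 4 (Iio 4)) atTop ∧
    Tendsto bubbleH (nhdsWithin 4 (Iio 4)) atTop := by
  have hid : ∀ lam : ℝ, bubbleV lam - π * bubbleH lam
      = -4 * π * ∫ r in (0:ℝ)..1, bubbleHeight r lam * r := by
    intro lam; unfold bubbleV bubbleH; ring
  have hpart2 : Tendsto (fun lam => bubbleV lam - π * bubbleH lam)
      (nhdsWithin 4 (Iio 4))
      (nhds (-4 * π * ∫ r in (0:ℝ)..1, bubbleHeight r 4 * r)) := by
    have heq : (fun lam => bubbleV lam - π * bubbleH lam)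
        = fun lam => -4 * π * ∫ r in (0:ℝ)..1, bubbleHeight r lam * r := funext hid
    rw [heq]
    exact tendsto_outer.const_mul _
  have hH : Tendsto bubbleH (nhdsWithin 4 (Iio 4)) atTop := by
    unfold bubbleH
    exact Filter.Tendsto.const_mul_atTop two_pos tendsto_H1
  refine ⟨fun lam _ _ => hid lam, hpart2, ?_, hH⟩
  have hV : Tendsto (fun lam => π * bubbleH lam + (bubbleV lam - π * bubbleH lam))
      (nhdsWithin 4 (Iio 4)) atTop :=
    Filter.Tendsto.atTop_add (Filter.Tendsto.const_mul_atTop Real.pi_pos hH) hpart2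
  exact hV.congr fun lam => by ring
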